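/- arXiv:2003.07192 — 4 statements merged into one kernel-verified Lean document; each statement's English description precedes it below -/
import Mathlib

section
/- At any generalized Nash equilibrium m* of the game induced by the misinformation-filtering mechanism, the government's proposed price equals the price allocated to the government, i.e., p̃₀* = π₀* = (1/N)·Σ_{i∈I} p̃₀^{i*}. -/
open Finset

noncomputable section

namespace MisinfoFilter

/-- A message of a social-media platform: the proposed minimum average trust `ht`,
the proposed prices `pP l` for the filters of the other competing platforms,
the proposed price `pG` for the government's lower bound, the proposed filters `a k`
for the competing platforms and the proposed lower bound `aG` for the government. -/
structure PlatformMsg (N : ℕ) where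
  ht : ℝ
  pP : Fin N → ℝ
  pG : ℝ
  a : Fin N → ℝ
  aG : ℝ

/-- The government's message: a proposed price `pG` and a proposed lower bound `aG`. -/
structure GovMsg where
  pG : ℝ
  aG : ℝ

/-- A message profile: one message per platform and one for the government. -/
structure Profile (N : ℕ) where
  pf : Fin N → PlatformMsg N
  gov : GovMsg

/-- Validity of a platform message: nonnegative proposed trust and prices. -/
def PlatformMsg.Valid {N : ℕ} (msg : PlatformMsg N) : Prop :=
  0 ≤ msg.ht ∧ (∀ l, 0 ≤ msg.pP l) ∧ 0 ≤ msg.pG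

/-- Validity of a government message: nonnegative proposed price. -/
def GovMsg.Valid (g : GovMsg) : Prop := 0 ≤ g.pG

/-- Unilateral deviation of platform `i` to message `msg`. -/
def Profile.updPf {N : ℕ} (m : Profile N) (i : Fin N) (msg : PlatformMsg N) : Profile N :=
  ⟨Function.update m.pf i msg, m.gov⟩

/-- Unilateral deviation of the government to message `g`. -/
def Profile.updGov {N : ℕ} (m : Profile N) (g : GovMsg) : Profile N :=
  ⟨m.pf, g⟩

/-- The data of the misinformation-filtering game: `N ≥ 1` platforms, competing sets
`C i ∋ i` with `|C i| ≥ 3` and symmetric competition, user fractions `n` (positive,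
summing to one), average trust functions `h i`, valuations `v i` (each depending only on
the coordinates in `C i`), the government's valuation `v0` and budget `b0 ≥ 0`. -/
structure Framework (N : ℕ) where
  hN : 1 ≤ N
  C : Fin N → Finset (Fin N)
  mem_C : ∀ i, i ∈ C i
  card_C : ∀ i, 3 ≤ (C i).card
  symm_C : ∀ i k, i ∈ C k ↔ k ∈ C i
  n : Fin N → ℝ
  n_pos : ∀ i, 0 < n i
  n_sum : ∑ i, n i = 1
  h : Fin N → ℝ → ℝ
  v : Fin N → (Fin N → ℝ) → ℝ
  v_localized : ∀ i p q, (∀ k ∈ C i, p k = q k) → v i p = v i q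
  v0 : ℝ → ℝ
  b0 : ℝ
  b0_nonneg : 0 ≤ b0

namespace Framework

variable {N : ℕ}

/-- Allocated filter `α_i(m)`: the average of proposals for `i` by the platforms in `C i`. -/
def alpha (F : Framework N) (m : Profile N) (i : Fin N) : ℝ :=
  (∑ k ∈ F.C i, (m.pf k).a i) / ((F.C i).card : ℝ)

/-- Allocated lower bound `α₀(m)`: the average of all proposed lower bounds. -/
def alpha0 (F : Framework N) (m : Profile N) : ℝ :=
  (m.gov.aG + ∑ k, (m.pf k).aG) / ((N : ℝ) + 1)

/-- `Σ_k n_k · h̃_k`. -/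
def trustSum (F : Framework N) (m : Profile N) : ℝ := ∑ k, F.n k * (m.pf k).ht

/-- Allocated minimum average trust `η_i(m)`. -/
def eta (F : Framework N) (m : Profile N) (i : Fin N) : ℝ :=
  min ((F.n i * (m.pf i).ht / F.trustSum m) * F.alpha0 m) 1

/-- Allocated price `π_target^payer` paid by `payer` per unit of the filter of `target`:
the average of the prices proposed for `target` by the platforms in `C target`
other than `target` and `payer`. -/
def price (F : Framework N) (m : Profile N) (payer target : Fin N) : ℝ :=
  (∑ k ∈ ((F.C target).erase target).erase payer, (m.pf k).pP target) /
    (((F.C target).card : ℝ) - 2)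

/-- Allocated government price `π₀`. -/
def price0 (F : Framework N) (m : Profile N) : ℝ := (∑ i, (m.pf i).pG) / (N : ℝ)

/-- Average proposal `ã_l^{-i}` for platform `l` by the platforms in `C l` other than `i`. -/
def aAvgMinus (F : Framework N) (m : Profile N) (i l : Fin N) : ℝ :=
  (∑ k ∈ (F.C l).erase i, (m.pf k).a l) / (((F.C l).card : ℝ) - 1)

/-- Average proposal `ã₀^{-i}` of lower bounds by all players except platform `i`. -/
def aGAvgMinus (F : Framework N) (m : Profile N) (i : Fin N) : ℝ :=
  (m.gov.aG + ∑ k, (m.pf k).aG - (m.pf i).aG) / (N : ℝ)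

/-- Tax `τ_i(m)` of platform `i`. -/
def tax (F : Framework N) (m : Profile N) (i : Fin N) : ℝ :=
  - m.gov.pG * F.eta m i
  - (∑ l ∈ (F.C i).erase i, F.price m l i) * F.alpha m i
  + ∑ l ∈ (F.C i).erase i, F.price m i l * F.alpha m l
  + (∑ l ∈ (F.C i).erase i, (m.pf i).pP l * ((m.pf i).a l - F.aAvgMinus m i l) ^ 2)
  + (m.pf i).pG * ((m.pf i).aG - F.aGAvgMinus m i) ^ 2

/-- Tax (investment) `τ₀(m)` of the government. -/
def tax0 (F : Framework N) (m : Profile N) : ℝ :=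
  F.price0 m * F.alpha0 m + (m.gov.pG - F.price0 m) ^ 2

/-- Utility of platform `i`. -/
def util (F : Framework N) (m : Profile N) (i : Fin N) : ℝ :=
  F.v i (F.alpha m) - F.tax m i

/-- Utility of the government. -/
def util0 (F : Framework N) (m : Profile N) : ℝ := F.v0 (F.alpha0 m) - F.tax0 m

/-- An admissible message profile: all messages valid and `Σ_k n_k h̃_k > 0`
(profiles with `Σ_k n_k h̃_k = 0` are excluded by the social planner). -/
def ProfileValid (F : Framework N) (m : Profile N) : Prop :=
  (∀ i, (m.pf i).Valid) ∧ m.gov.Valid ∧ 0 < F.trustSum m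

/-- Generalized Nash equilibrium of the induced game: the profile is admissible, every
player's own allocation is feasible, no platform can profit by a unilateral deviation whose
allocated filter stays in its feasible set `S_i`, and the government cannot profit by a
unilateral deviation satisfying its feasibility and budget constraints. -/
def IsGNE (F : Framework N) (m : Profile N) : Prop :=
  F.ProfileValid m ∧
  (∀ i, F.alpha m i ∈ Set.Icc (0:ℝ) 1 ∧ F.eta m i ≤ F.n i * F.h i (F.alpha m i)) ∧
  F.alpha0 m ∈ Set.Icc (0:ℝ) 1 ∧ F.price0 m * F.alpha0 m ≤ F.b0 ∧
  (∀ (i : Fin N) (msg : PlatformMsg N), msg.Valid →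
    0 < F.trustSum (m.updPf i msg) →
    F.alpha (m.updPf i msg) i ∈ Set.Icc (0:ℝ) 1 →
    F.eta (m.updPf i msg) i ≤ F.n i * F.h i (F.alpha (m.updPf i msg) i) →
    F.util (m.updPf i msg) i ≤ F.util m i) ∧
  (∀ g : GovMsg, g.Valid →
    F.alpha0 (m.updGov g) ∈ Set.Icc (0:ℝ) 1 →
    F.price0 (m.updGov g) * F.alpha0 (m.updGov g) ≤ F.b0 →
    F.util0 (m.updGov g) ≤ F.util0 m)

end Framework

/-- The standing regularity assumptions of the model: each `h i` maps `[0,1]` into `[0,1]`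
and is strictly increasing, concave and differentiable; each valuation `v i` is nonnegative,
concave and differentiable on the box, decreasing in the own coordinate and strictly
increasing in the coordinates of the other competing platforms; the government's valuation
`v0` is nonnegative, increasing, concave and differentiable on `[0,1]`. -/
structure Framework.Regular {N : ℕ} (F : Framework N) : Prop where
  h_maps : ∀ i, Set.MapsTo (F.h i) (Set.Icc 0 1) (Set.Icc 0 1)
  h_strictMono : ∀ i, StrictMonoOn (F.h i) (Set.Icc 0 1)
  h_concave : ∀ i, ConcaveOn ℝ (Set.Icc 0 1) (F.h i)
  h_diff : ∀ i, DifferentiableOn ℝ (F.h i) (Set.Icc 0 1)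
  v_nonneg : ∀ i p, (∀ k, p k ∈ Set.Icc (0:ℝ) 1) → 0 ≤ F.v i p
  v_concave : ∀ i, ConcaveOn ℝ {p : Fin N → ℝ | ∀ k, p k ∈ Set.Icc (0:ℝ) 1} (F.v i)
  v_diff : ∀ i, DifferentiableOn ℝ (F.v i) {p : Fin N → ℝ | ∀ k, p k ∈ Set.Icc (0:ℝ) 1}
  v_own_anti : ∀ i p, (∀ k, p k ∈ Set.Icc (0:ℝ) 1) →
    ∀ x y : ℝ, x ∈ Set.Icc (0:ℝ) 1 → y ∈ Set.Icc (0:ℝ) 1 → x ≤ y →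
      F.v i (Function.update p i y) ≤ F.v i (Function.update p i x)
  v_other_strictMono : ∀ i l, l ∈ F.C i → l ≠ i →
    ∀ p, (∀ k, p k ∈ Set.Icc (0:ℝ) 1) →
    ∀ x y : ℝ, x ∈ Set.Icc (0:ℝ) 1 → y ∈ Set.Icc (0:ℝ) 1 → x < y →
      F.v i (Function.update p l x) < F.v i (Function.update p l y)
  v0_nonneg : ∀ x ∈ Set.Icc (0:ℝ) 1, 0 ≤ F.v0 x
  v0_mono : MonotoneOn F.v0 (Set.Icc 0 1)
  v0_concave : ConcaveOn ℝ (Set.Icc 0 1) F.v0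
  v0_diff : DifferentiableOn ℝ F.v0 (Set.Icc 0 1)

end MisinfoFilter

end

namespace MisinfoFilter

namespace Framework

variable {N : ℕ} (F : Framework N)

lemma price0_nonneg {m : Profile N} (hpf : ∀ i, (m.pf i).Valid) : 0 ≤ F.price0 m :=
  div_nonneg (sum_nonneg fun i _ => (hpf i).2.2) (Nat.cast_nonneg N)

/-- Only the quadratic penalty in `τ₀` sees the government's own price; `α₀` and `π₀` do not. -/
lemma util0_updGov_pG (m : Profile N) (p : ℝ) :
    F.util0 (m.updGov ⟨p, m.gov.aG⟩) =
      F.util0 m + (m.gov.pG - F.price0 m) ^ 2 - (p - F.price0 m) ^ 2 := by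
  simp only [util0, tax0, alpha0, price0, Profile.updGov]
  ring

/-- The deviation to `p̃₀ = π₀` is feasible and saves the penalty `(p̃₀ - π₀)²`. -/
lemma IsGNE.gov_pG_eq_price0 {m : Profile N} (hm : F.IsGNE m) : m.gov.pG = F.price0 m := by
  obtain ⟨⟨hpf, -, -⟩, -, halpha0, hbudget, -, hdevGov⟩ := hm
  have hopt := hdevGov ⟨F.price0 m, m.gov.aG⟩ (F.price0_nonneg hpf) halpha0 hbudget
  rw [util0_updGov_pG, sub_self] at hopt
  have hpenalty : (m.gov.pG - F.price0 m) ^ 2 = 0 := le_antisymm (by linarith) (sq_nonneg _)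
  exact sub_eq_zero.mp (pow_eq_zero_iff two_ne_zero |>.mp hpenalty)

end Framework

theorem gov_price_eq_allocated_price_at_GNE_general {N : ℕ} (F : Framework N)
    (m : Profile N) (hm : F.IsGNE m) :
    m.gov.pG = F.price0 m ∧ m.gov.pG = (∑ i, (m.pf i).pG) / (N : ℝ) :=
  ⟨hm.gov_pG_eq_price0, hm.gov_pG_eq_price0⟩

/-- At any GNE `m` of the induced game, the government's proposed price
equals the price allocated to the government: `p̃₀* = π₀* = (1/N)·Σ_{i∈I} p̃₀^{i*}`. -/
theorem gov_price_eq_allocated_price_at_GNE {N : ℕ} (F : Framework N) (hreg : F.Regular)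
    (m : Profile N) (hm : F.IsGNE m) :
    m.gov.pG = F.price0 m ∧ m.gov.pG = (∑ i, (m.pf i).pG) / (N : ℝ) :=
  gov_price_eq_allocated_price_at_GNE_general F m hm

end MisinfoFilter
end

section
/- At any generalized Nash equilibrium m* of the game induced by the misinformation-filtering mechanism, for every platform i ∈ I and every index k ∈ D_{-i} with p̃_k^{i*} ≠ 0, platform i's proposal for k agrees with the average proposal of the others: ã_k^{i*} = ã_k^{−i*} (for k ∈ C_{-i} this is ã_k^{−i} = (1/(|C_k|−1))·Σ_{l∈C_k, l≠i} ã_k^l, and for k = 0 it is ã₀^{−i} = (1/(|J|−1))·Σ_{l∈J, l≠i} ã₀^l). -/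
open Finset

/-! A platform's own price proposals affect its own utility only through the penalty terms
`p̃_l^i (ã_l^i - ã_l^{-i})²` of its tax: allocations, feasibility and the rest of `τ_i` are
computed from the other players' prices. Hence at a GNE, platform `i` cannot gain by
resetting a price to `0`, which removes exactly one penalty term; so every penalty term carrying
a positive price vanishes. -/

namespace MisinfoFilter

variable {N : ℕ}

namespace Profile

variable (m : Profile N) (i : Fin N) (pP : Fin N → ℝ) (pG : ℝ)

def reprice : Profile N :=
  m.updPf i { m.pf i with pP := pP, pG := pG }

@[simp]
lemma reprice_gov : (m.reprice i pP pG).gov = m.gov := rfl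

@[simp]
lemma reprice_pf_self : (m.reprice i pP pG).pf i = { m.pf i with pP := pP, pG := pG } :=
  Function.update_self ..

lemma reprice_pf_of_ne {k : Fin N} (hk : k ≠ i) : (m.reprice i pP pG).pf k = m.pf k :=
  Function.update_of_ne hk ..

@[simp]
lemma ht_reprice_pf (k : Fin N) : ((m.reprice i pP pG).pf k).ht = (m.pf k).ht := by
  rcases eq_or_ne k i with rfl | hk
  · simp
  · rw [reprice_pf_of_ne _ _ _ _ hk]

@[simp]
lemma a_reprice_pf (k : Fin N) : ((m.reprice i pP pG).pf k).a = (m.pf k).a := by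
  rcases eq_or_ne k i with rfl | hk
  · simp
  · rw [reprice_pf_of_ne _ _ _ _ hk]

@[simp]
lemma aG_reprice_pf (k : Fin N) : ((m.reprice i pP pG).pf k).aG = (m.pf k).aG := by
  rcases eq_or_ne k i with rfl | hk
  · simp
  · rw [reprice_pf_of_ne _ _ _ _ hk]

end Profile

namespace Framework

variable (F : Framework N) (m : Profile N) (i : Fin N) (pP : Fin N → ℝ) (pG : ℝ)

@[simp]
lemma alpha_reprice : F.alpha (m.reprice i pP pG) = F.alpha m := by
  funext l
  simp [alpha]

@[simp]
lemma alpha0_reprice : F.alpha0 (m.reprice i pP pG) = F.alpha0 m := by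
  simp [alpha0]

@[simp]
lemma trustSum_reprice : F.trustSum (m.reprice i pP pG) = F.trustSum m := by
  simp [trustSum]

@[simp]
lemma eta_reprice (j : Fin N) : F.eta (m.reprice i pP pG) j = F.eta m j := by
  simp [eta]

@[simp]
lemma aAvgMinus_reprice (j l : Fin N) :
    F.aAvgMinus (m.reprice i pP pG) j l = F.aAvgMinus m j l := by
  simp [aAvgMinus]

@[simp]
lemma aGAvgMinus_reprice (j : Fin N) :
    F.aGAvgMinus (m.reprice i pP pG) j = F.aGAvgMinus m j := by
  simp [aGAvgMinus]

lemma price_reprice_of_notMem {payer target : Fin N}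
    (hi : i ∉ ((F.C target).erase target).erase payer) :
    F.price (m.reprice i pP pG) payer target = F.price m payer target := by
  unfold price
  congr 1
  refine sum_congr rfl fun k hk => ?_
  rw [Profile.reprice_pf_of_ne _ _ _ _ (ne_of_mem_of_not_mem hk hi)]

/-- The part of `F.tax m i` that depends on platform `i`'s own prices, evaluated at `pP`, `pG`. -/
noncomputable def penalty : ℝ :=
  ∑ l ∈ (F.C i).erase i, pP l * ((m.pf i).a l - F.aAvgMinus m i l) ^ 2
    + pG * ((m.pf i).aG - F.aGAvgMinus m i) ^ 2

lemma util_reprice :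
    F.util (m.reprice i pP pG) i
      = F.util m i + F.penalty m i (m.pf i).pP (m.pf i).pG - F.penalty m i pP pG := by
  have hpaid : ∑ l ∈ (F.C i).erase i, F.price (m.reprice i pP pG) l i
      = ∑ l ∈ (F.C i).erase i, F.price m l i :=
    sum_congr rfl fun l _ => F.price_reprice_of_notMem m i pP pG
      fun h => notMem_erase i _ (mem_of_mem_erase h)
  have hreceived : ∑ l ∈ (F.C i).erase i, F.price (m.reprice i pP pG) i l * F.alpha m l
      = ∑ l ∈ (F.C i).erase i, F.price m i l * F.alpha m l :=
    sum_congr rfl fun l _ => by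
      rw [F.price_reprice_of_notMem m i pP pG (notMem_erase i _)]
  simp only [util, tax, penalty, alpha_reprice, eta_reprice, aAvgMinus_reprice,
    aGAvgMinus_reprice, Profile.reprice_gov, Profile.reprice_pf_self, hpaid, hreceived]
  ring

lemma penalty_eq_update_zero_add {k : Fin N} (hk : k ∈ (F.C i).erase i) :
    F.penalty m i pP pG = F.penalty m i (Function.update pP k 0) pG
      + pP k * ((m.pf i).a k - F.aAvgMinus m i k) ^ 2 := by
  have hrest : ∑ l ∈ ((F.C i).erase i).erase k,
        Function.update pP k 0 l * ((m.pf i).a l - F.aAvgMinus m i l) ^ 2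
      = ∑ l ∈ ((F.C i).erase i).erase k, pP l * ((m.pf i).a l - F.aAvgMinus m i l) ^ 2 :=
    sum_congr rfl fun l hl => by rw [Function.update_of_ne (ne_of_mem_erase hl)]
  simp only [penalty, ← add_sum_erase _ _ hk, hrest, Function.update_self]
  ring

lemma penalty_eq_zero_add :
    F.penalty m i pP pG = F.penalty m i pP 0 + pG * ((m.pf i).aG - F.aGAvgMinus m i) ^ 2 := by
  simp only [penalty]
  ring

lemma IsGNE.penalty_le {F : Framework N} {m : Profile N} (hm : F.IsGNE m) (i : Fin N)
    {pP : Fin N → ℝ} {pG : ℝ} (hpP : ∀ l, 0 ≤ pP l) (hpG : 0 ≤ pG) :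
    F.penalty m i (m.pf i).pP (m.pf i).pG ≤ F.penalty m i pP pG := by
  obtain ⟨⟨hvalid, -, htrust⟩, hfeas, -, -, hdev, -⟩ := hm
  have hle : F.util (m.reprice i pP pG) i ≤ F.util m i :=
    hdev i _ ⟨(hvalid i).1, hpP, hpG⟩
      (show 0 < F.trustSum (m.reprice i pP pG) by simpa using htrust)
      (show F.alpha (m.reprice i pP pG) i ∈ _ by simpa using (hfeas i).1)
      (show F.eta (m.reprice i pP pG) i ≤ F.n i * F.h i (F.alpha (m.reprice i pP pG) i) by
        simpa using (hfeas i).2)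
  rw [util_reprice] at hle
  linarith

end Framework

lemma eq_of_mul_sub_sq_nonpos {p x y : ℝ} (hp : 0 < p) (h : p * (x - y) ^ 2 ≤ 0) : x = y := by
  have hsq : (x - y) ^ 2 = 0 := le_antisymm (nonpos_of_mul_nonpos_right h hp) (sq_nonneg _)
  exact sub_eq_zero.1 (pow_eq_zero_iff two_ne_zero |>.1 hsq)

theorem proposal_consistency_at_GNE_general {N : ℕ} (F : Framework N)
    (m : Profile N) (hm : F.IsGNE m) :
    (∀ i k, k ∈ F.C i → k ≠ i → (m.pf i).pP k ≠ 0 →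
      (m.pf i).a k = F.aAvgMinus m i k) ∧
    (∀ i, (m.pf i).pG ≠ 0 → (m.pf i).aG = F.aGAvgMinus m i) := by
  have hvalid := hm.1.1
  refine ⟨fun i k hkC hki hpk => ?_, fun i hpG => ?_⟩
  · have hpP : ∀ l, 0 ≤ Function.update (m.pf i).pP k 0 l := fun l => by
      rcases eq_or_ne l k with rfl | hl
      · simp
      · simpa [hl] using (hvalid i).2.1 l
    have hle := hm.penalty_le i hpP (hvalid i).2.2
    rw [F.penalty_eq_update_zero_add m i _ _ (mem_erase.2 ⟨hki, hkC⟩)] at hle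
    exact eq_of_mul_sub_sq_nonpos (((hvalid i).2.1 k).lt_of_ne' hpk) (by linarith)
  · have hle := hm.penalty_le i (hvalid i).2.1 le_rfl
    rw [F.penalty_eq_zero_add m i _ (m.pf i).pG] at hle
    exact eq_of_mul_sub_sq_nonpos ((hvalid i).2.2.lt_of_ne' hpG) (by linarith)

/-- At any GNE `m`, for every platform `i` and every `k ∈ D_{-i}` with
`p̃_k^{i*} ≠ 0`, platform `i`'s proposal for `k` agrees with the average proposal of the
others: `ã_k^{i*} = ã_k^{-i*}` for `k ∈ C_{-i}`, and `ã₀^{i*} = ã₀^{-i*}` for `k = 0`. -/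
theorem proposal_consistency_at_GNE {N : ℕ} (F : Framework N) (hreg : F.Regular)
    (m : Profile N) (hm : F.IsGNE m) :
    (∀ i k, k ∈ F.C i → k ≠ i → (m.pf i).pP k ≠ 0 →
      (m.pf i).a k = F.aAvgMinus m i k) ∧
    (∀ i, (m.pf i).pG ≠ 0 → (m.pf i).aG = F.aGAvgMinus m i) :=
  proposal_consistency_at_GNE_general F m hm

end MisinfoFilter
end

section
/- (Strong implementation) Let m* be any generalized Nash equilibrium of the game induced by the misinformation-filtering mechanism such that (n_i·h̃_i* / Σ_{k∈I} n_k·h̃_k*)·α₀(m*) ≤ 1 for every i ∈ I and the government's budget constraint is inactive at m*, i.e., π₀*·α₀(m*) < b₀. Then the allocated profile (α₀(m*), α₁(m*), …, α_N(m*)) is an optimal solution of the social welfare problem, i.e., it maximizes v₀(a₀) + Σ_{i∈I} v_i(a_k : k ∈ C_i) over all a with 0 ≤ a_i ≤ 1 for every i ∈ J and a₀ ≤ Σ_{i∈I} n_i·h_i(a_i). -/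
open Finset

/-!
At an equilibrium the government's own price proposal must equal the allocated price `π₀`
(any other proposal only adds the penalty `(p̃₀ - π₀)²`), so `α₀(m)` maximises the concave
surplus `v₀(y) - π₀ y` on `[0,1]` under the budget constraint; since that constraint is slack
at `α₀(m)`, it can be dropped. A platform `i` can, by one deviation, make the allocated filters
of its competitors any profile `a` and its own minimum trust `n_i h_i(a_i)`, at prices it does
not influence; hence `α(m)` maximises `v_i(a) + p̃₀ n_i h_i(a_i)` plus its net transfers. The
transfers cancel in the sum over platforms because competition is symmetric, and the `η_i`
add up to `α₀(m)` when no minimum is binding. Summing everything, with `π₀` as a Lagrange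
multiplier for `a₀ ≤ Σ n_i h_i(a_i)`, gives optimality.
-/

namespace Finset

variable {ι α M : Type*} [DecidableEq ι] [AddCommMonoid M]

theorem sum_apply_update_of_mem {s : Finset ι} {i : ι} (hi : i ∈ s) (g : ι → α) (x : α)
    (f : ι → α → M) :
    ∑ k ∈ s, f k (Function.update g i x k) = f i x + ∑ k ∈ s.erase i, f k (g k) := by
  rw [← add_sum_erase s _ hi, Function.update_self]
  congr 1
  exact sum_congr rfl fun k hk => by rw [Function.update_of_ne (ne_of_mem_erase hk)]

theorem sum_apply_update_of_notMem {s : Finset ι} {i : ι} (hi : i ∉ s) (g : ι → α) (x : α)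
    (f : ι → α → M) :
    ∑ k ∈ s, f k (Function.update g i x k) = ∑ k ∈ s, f k (g k) :=
  sum_congr rfl fun k hk => by rw [Function.update_of_ne (ne_of_mem_of_not_mem hk hi)]

theorem sum_sum_erase_comm_of_symm [Fintype ι] (C : ι → Finset ι)
    (hC : ∀ i k, i ∈ C k ↔ k ∈ C i) (f : ι → ι → M) :
    ∑ i, ∑ l ∈ (C i).erase i, f l i = ∑ i, ∑ l ∈ (C i).erase i, f i l :=
  sum_comm' fun i l => by simp only [mem_univ, true_and, and_true, mem_erase, hC l i, ne_comm]

end Finset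

namespace MisinfoFilter

namespace Framework

open Set

variable {N : ℕ} (F : Framework N) (m : Profile N)

theorem n_le_one (i : Fin N) : F.n i ≤ 1 :=
  F.n_sum ▸ single_le_sum (fun k _ => (F.n_pos k).le) (mem_univ i)

theorem sum_eta_eq_alpha0 (hT : 0 < F.trustSum m)
    (hmin : ∀ i, (F.n i * (m.pf i).ht / F.trustSum m) * F.alpha0 m ≤ 1) :
    ∑ i, F.eta m i = F.alpha0 m := by
  calc ∑ i, F.eta m i = ∑ i, F.n i * (m.pf i).ht * (F.alpha0 m / F.trustSum m) :=
        sum_congr rfl fun i _ => by rw [eta, min_eq_left (hmin i)]; ring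
    _ = F.alpha0 m := by rw [← sum_mul, ← trustSum]; field_simp

theorem price0_nonneg_s7 (hm : F.IsGNE m) : 0 ≤ F.price0 m :=
  div_nonneg (sum_nonneg fun k _ => (hm.1.1 k).2.2) N.cast_nonneg

theorem util0_eq :
    F.util0 m = F.v0 (F.alpha0 m) - F.price0 m * F.alpha0 m - (m.gov.pG - F.price0 m) ^ 2 := by
  unfold util0 tax0
  ring

noncomputable def govMsgFor (y : ℝ) : GovMsg :=
  ⟨F.price0 m, y * (N + 1) - ∑ k, (m.pf k).aG⟩

theorem alpha0_updGov_govMsgFor (y : ℝ) : F.alpha0 (m.updGov (F.govMsgFor m y)) = y := by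
  simp only [alpha0, Profile.updGov, govMsgFor, sub_add_cancel]
  field_simp

theorem util0_updGov_govMsgFor (y : ℝ) :
    F.util0 (m.updGov (F.govMsgFor m y)) = F.v0 y - F.price0 m * y := by
  rw [util0_eq, alpha0_updGov_govMsgFor]
  simp only [Profile.updGov, govMsgFor, price0, sub_self]
  ring

theorem govSurplus_le_util0 (hm : F.IsGNE m) {y : ℝ} (hy : y ∈ Icc (0 : ℝ) 1)
    (hb : F.price0 m * y ≤ F.b0) : F.v0 y - F.price0 m * y ≤ F.util0 m := by
  rw [← util0_updGov_govMsgFor]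
  exact hm.2.2.2.2.2 _ (F.price0_nonneg_s7 m hm) (by rwa [alpha0_updGov_govMsgFor])
    (by rwa [alpha0_updGov_govMsgFor])

theorem pG_eq_price0 (hm : F.IsGNE m) : m.gov.pG = F.price0 m := by
  have hdev := F.govSurplus_le_util0 m hm hm.2.2.1 hm.2.2.2.1
  rw [util0_eq] at hdev
  nlinarith [sq_nonneg (m.gov.pG - F.price0 m)]

theorem govSurplus_le_of_budget (hm : F.IsGNE m) {y : ℝ} (hy : y ∈ Icc (0 : ℝ) 1)
    (hb : F.price0 m * y ≤ F.b0) :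
    F.v0 y - F.price0 m * y ≤ F.v0 (F.alpha0 m) - F.price0 m * F.alpha0 m := by
  have hdev := F.govSurplus_le_util0 m hm hy hb
  rwa [util0_eq, F.pG_eq_price0 m hm, sub_self, sq, mul_zero, sub_zero] at hdev

theorem isMaxOn_govSurplus (hm : F.IsGNE m) (hconc : ConcaveOn ℝ (Icc 0 1) F.v0)
    (hbudget : F.price0 m * F.alpha0 m < F.b0) :
    IsMaxOn (fun y => F.v0 y - F.price0 m * y) (Icc 0 1) (F.alpha0 m) := by
  refine IsMaxOn.of_isLocalMaxOn_of_concaveOn hm.2.2.1 ?_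
    (hconc.sub ((LinearMap.mul ℝ ℝ (F.price0 m)).convexOn (convex_Icc 0 1)))
  have hslack : {y | F.price0 m * y < F.b0} ∈ nhds (F.alpha0 m) :=
    (isOpen_lt (continuous_const.mul continuous_id) continuous_const).mem_nhds hbudget
  filter_upwards [self_mem_nhdsWithin, nhdsWithin_le_nhds hslack] with y hy hyb
  exact F.govSurplus_le_of_budget m hm hy hyb.le

noncomputable def netTransfer (i : Fin N) (x : Fin N → ℝ) : ℝ :=
  (∑ l ∈ (F.C i).erase i, F.price m l i) * x i - ∑ l ∈ (F.C i).erase i, F.price m i l * x l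

theorem sum_netTransfer (x : Fin N → ℝ) : ∑ i, F.netTransfer m i x = 0 := by
  simp only [netTransfer, sum_sub_distrib, sum_mul]
  rw [sum_sum_erase_comm_of_symm F.C F.symm_C fun l i => F.price m l i * x i, sub_self]

theorem netTransfer_congr (i : Fin N) {x y : Fin N → ℝ} (hxy : ∀ l ∈ F.C i, x l = y l) :
    F.netTransfer m i x = F.netTransfer m i y := by
  rw [netTransfer, netTransfer, hxy i (F.mem_C i),
    sum_congr rfl fun l hl => congrArg (F.price m i l * ·) (hxy l (mem_of_mem_erase hl))]

theorem util_eq (i : Fin N) :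
    F.util m i = F.v i (F.alpha m) + m.gov.pG * F.eta m i + F.netTransfer m i (F.alpha m)
      - ∑ l ∈ (F.C i).erase i, (m.pf i).pP l * ((m.pf i).a l - F.aAvgMinus m i l) ^ 2
      - (m.pf i).pG * ((m.pf i).aG - F.aGAvgMinus m i) ^ 2 := by
  simp only [util, tax, netTransfer]
  ring

theorem util_le (i : Fin N) (hval : (m.pf i).Valid) :
    F.util m i ≤ F.v i (F.alpha m) + m.gov.pG * F.eta m i + F.netTransfer m i (F.alpha m) := by
  have hpP :
      0 ≤ ∑ l ∈ (F.C i).erase i, (m.pf i).pP l * ((m.pf i).a l - F.aAvgMinus m i l) ^ 2 :=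
    sum_nonneg fun l _ => mul_nonneg (hval.2.1 l) (sq_nonneg _)
  have hpG : 0 ≤ (m.pf i).pG * ((m.pf i).aG - F.aGAvgMinus m i) ^ 2 :=
    mul_nonneg hval.2.2 (sq_nonneg _)
  rw [util_eq]
  linarith

section updPf

variable (i : Fin N) (msg : PlatformMsg N)

@[simp]
theorem updPf_pf_self : (m.updPf i msg).pf i = msg :=
  Function.update_self ..

theorem trustSum_updPf : F.trustSum (m.updPf i msg) =
    F.n i * msg.ht + ∑ k ∈ univ.erase i, F.n k * (m.pf k).ht :=
  sum_apply_update_of_mem (mem_univ i) m.pf msg fun k q => F.n k * q.ht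

theorem alpha0_updPf : F.alpha0 (m.updPf i msg) =
    (m.gov.aG + (msg.aG + ∑ k ∈ univ.erase i, (m.pf k).aG)) / (N + 1) := by
  rw [alpha0, Profile.updPf, sum_apply_update_of_mem (mem_univ i) m.pf msg fun _ q => q.aG]

theorem alpha_updPf_of_mem {l : Fin N} (hil : i ∈ F.C l) : F.alpha (m.updPf i msg) l =
    (msg.a l + ∑ k ∈ (F.C l).erase i, (m.pf k).a l) / (F.C l).card := by
  rw [alpha, Profile.updPf, sum_apply_update_of_mem hil m.pf msg fun _ q => q.a l]

theorem price_updPf_of_notMem {payer target : Fin N}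
    (hi : i ∉ ((F.C target).erase target).erase payer) :
    F.price (m.updPf i msg) payer target = F.price m payer target := by
  rw [price, price, Profile.updPf, sum_apply_update_of_notMem hi m.pf msg fun _ q => q.pP target]

theorem netTransfer_updPf_self : F.netTransfer (m.updPf i msg) i = F.netTransfer m i := by
  have hreceived (l : Fin N) : F.price (m.updPf i msg) l i = F.price m l i :=
    F.price_updPf_of_notMem m i msg (by simp)
  have hpaid (l : Fin N) : F.price (m.updPf i msg) i l = F.price m i l :=
    F.price_updPf_of_notMem m i msg (by simp)
  funext x
  simp only [netTransfer, hreceived, hpaid]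

end updPf

/-- Chosen so that the allocated filter of every `l` with `i ∈ C l` becomes `a l` and, as
`h̃_i = 1`, the allocated minimum trust `η_i` becomes `n_i h_i(a_i)`. -/
noncomputable def deviation (i : Fin N) (a : Fin N → ℝ) : PlatformMsg N where
  ht := 1
  pP := 0
  pG := 0
  a l := (F.C l).card * a l - ∑ k ∈ (F.C l).erase i, (m.pf k).a l
  aG := F.h i (a i) * (F.n i + ∑ k ∈ univ.erase i, F.n k * (m.pf k).ht) * (N + 1)
    - m.gov.aG - ∑ k ∈ univ.erase i, (m.pf k).aG

section deviation

variable (i : Fin N) (a : Fin N → ℝ)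

theorem deviation_valid : (F.deviation m i a).Valid :=
  ⟨zero_le_one, fun _ => le_rfl, le_rfl⟩

theorem trustSum_updPf_deviation : F.trustSum (m.updPf i (F.deviation m i a)) =
    F.n i + ∑ k ∈ univ.erase i, F.n k * (m.pf k).ht := by
  rw [trustSum_updPf, deviation, mul_one]

theorem trustSum_updPf_deviation_pos (hval : ∀ k, (m.pf k).Valid) :
    0 < F.trustSum (m.updPf i (F.deviation m i a)) := by
  rw [trustSum_updPf_deviation]
  exact add_pos_of_pos_of_nonneg (F.n_pos i)
    (sum_nonneg fun k _ => mul_nonneg (F.n_pos k).le (hval k).1)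

theorem alpha_updPf_deviation {l : Fin N} (hil : i ∈ F.C l) :
    F.alpha (m.updPf i (F.deviation m i a)) l = a l := by
  have hC : ((F.C l).card : ℝ) ≠ 0 := by have := F.card_C l; positivity
  rw [alpha_updPf_of_mem F m i _ hil, deviation, sub_add_cancel]
  field_simp

theorem v_updPf_deviation : F.v i (F.alpha (m.updPf i (F.deviation m i a))) = F.v i a :=
  F.v_localized i _ a fun _ hk => F.alpha_updPf_deviation m i a ((F.symm_C i _).mpr hk)

theorem eta_updPf_deviation (hval : ∀ k, (m.pf k).Valid) (hna : F.n i * F.h i (a i) ≤ 1) :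
    F.eta (m.updPf i (F.deviation m i a)) i = F.n i * F.h i (a i) := by
  have hT := F.trustSum_updPf_deviation_pos m i a hval
  have hα0 : F.alpha0 (m.updPf i (F.deviation m i a)) =
      F.h i (a i) * F.trustSum (m.updPf i (F.deviation m i a)) := by
    rw [alpha0_updPf, trustSum_updPf_deviation, deviation]
    field_simp
    ring
  rw [eta, hα0, updPf_pf_self, show (F.deviation m i a).ht = 1 from rfl]
  have hcancel : F.n i * 1 / F.trustSum (m.updPf i (F.deviation m i a)) *
      (F.h i (a i) * F.trustSum (m.updPf i (F.deviation m i a))) = F.n i * F.h i (a i) := by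
    field_simp
  rw [hcancel, min_eq_left hna]

theorem util_updPf_deviation (hval : ∀ k, (m.pf k).Valid) (hna : F.n i * F.h i (a i) ≤ 1) :
    F.util (m.updPf i (F.deviation m i a)) i =
      F.v i a + m.gov.pG * (F.n i * F.h i (a i)) + F.netTransfer m i a := by
  rw [util_eq, v_updPf_deviation, eta_updPf_deviation F m i a hval hna, netTransfer_updPf_self,
    F.netTransfer_congr m i fun l hl => F.alpha_updPf_deviation m i a ((F.symm_C i l).mpr hl)]
  simp [Profile.updPf, deviation]

end deviation

theorem v_add_netTransfer_le (hm : F.IsGNE m) (i : Fin N) {a : Fin N → ℝ}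
    (hai : a i ∈ Icc (0 : ℝ) 1) (hna : F.n i * F.h i (a i) ≤ 1) :
    F.v i a + m.gov.pG * (F.n i * F.h i (a i)) + F.netTransfer m i a ≤
      F.v i (F.alpha m) + m.gov.pG * F.eta m i + F.netTransfer m i (F.alpha m) := by
  obtain ⟨⟨hval, -, -⟩, -, -, -, hplatform, -⟩ := hm
  have hαi := F.alpha_updPf_deviation m i a (F.mem_C i)
  rw [← F.util_updPf_deviation m i a hval hna]
  refine (hplatform i _ (F.deviation_valid m i a) (F.trustSum_updPf_deviation_pos m i a hval)
    (hαi ▸ hai) ?_).trans (F.util_le m i (hval i))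
  rw [F.eta_updPf_deviation m i a hval hna, hαi]

theorem sum_v_add_price0_mul_le (hm : F.IsGNE m)
    (hmin : ∀ i, (F.n i * (m.pf i).ht / F.trustSum m) * F.alpha0 m ≤ 1) {a : Fin N → ℝ}
    (ha : ∀ i, a i ∈ Icc (0 : ℝ) 1) (hna : ∀ i, F.n i * F.h i (a i) ≤ 1) :
    ∑ i, F.v i a + F.price0 m * ∑ i, F.n i * F.h i (a i) ≤
      ∑ i, F.v i (F.alpha m) + F.price0 m * F.alpha0 m := by
  have hsum := Finset.sum_le_sum fun i (_ : i ∈ Finset.univ) =>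
    F.v_add_netTransfer_le m hm i (ha i) (hna i)
  simp only [sum_add_distrib, ← mul_sum, sum_netTransfer, add_zero] at hsum
  rwa [F.sum_eta_eq_alpha0 m hm.1.2.2 hmin, F.pG_eq_price0 m hm] at hsum

end Framework

/-- **Strong implementation.** Let `m` be any GNE at which the minimum in the
definition of `η_i` is not binding and the government's budget constraint is inactive.
Then the allocated profile `(α₀(m), α₁(m), …, α_N(m))` is an optimal solution of the social
welfare problem. -/
theorem strong_implementation {N : ℕ} (F : Framework N) (hreg : F.Regular)
    (m : Profile N) (hm : F.IsGNE m)
    (hmin : ∀ i, (F.n i * (m.pf i).ht / F.trustSum m) * F.alpha0 m ≤ 1)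
    (hbudget : F.price0 m * F.alpha0 m < F.b0) :
    F.alpha0 m ∈ Set.Icc (0:ℝ) 1 ∧
    (∀ i, F.alpha m i ∈ Set.Icc (0:ℝ) 1) ∧
    F.alpha0 m ≤ ∑ i, F.n i * F.h i (F.alpha m i) ∧
    (∀ (a0 : ℝ) (a : Fin N → ℝ), a0 ∈ Set.Icc (0:ℝ) 1 →
      (∀ i, a i ∈ Set.Icc (0:ℝ) 1) → a0 ≤ ∑ i, F.n i * F.h i (a i) →
      F.v0 a0 + ∑ i, F.v i a ≤ F.v0 (F.alpha0 m) + ∑ i, F.v i (F.alpha m)) := by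
  have hfeas := hm.2.1
  refine ⟨hm.2.2.1, fun i => (hfeas i).1, ?_, ?_⟩
  · rw [← F.sum_eta_eq_alpha0 m hm.1.2.2 hmin]
    exact sum_le_sum fun i _ => (hfeas i).2
  · intro a0 a ha0 ha hcon
    have hna (i : Fin N) : F.n i * F.h i (a i) ≤ 1 :=
      (mul_le_of_le_one_right (F.n_pos i).le (hreg.h_maps i (ha i)).2).trans (F.n_le_one i)
    have hplatforms := F.sum_v_add_price0_mul_le m hm hmin ha hna
    have hgov : F.v0 a0 - F.price0 m * a0 ≤ F.v0 (F.alpha0 m) - F.price0 m * F.alpha0 m :=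
      F.isMaxOn_govSurplus m hm hreg.v0_concave hbudget ha0
    have hlagrange := mul_le_mul_of_nonneg_left hcon (F.price0_nonneg_s7 m hm)
    linarith

end MisinfoFilter
end

section
/- (Zero-tax opt-out deviation) Fix a platform i ∈ I and any messages m_{-i} of all other players. Then there exists a message m_i for platform i, with all its proposed prices equal to zero (p̃_l^i = 0 for every l ∈ D_{-i}), such that under m = (m_i, m_{-i}): α_k(m) = 0 for every k ∈ C_i, α₀(m) = 0, η_i(m) = 0, τ_i(m) = 0, and consequently u_i(m) = v_i(a_k = 0 : k ∈ C_i). -/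
open Finset

/-! Platform `i` proposes, for every `k ∈ C i` and for the lower bound, the negative of the sum
of everybody else's proposals; since `i ∈ C k` by symmetry, every average that `i` takes part
in then vanishes. With its own prices set to zero, every remaining term of `τ_i` carries a
factor `α_k` with `k ∈ C i` or `η_i`, which is proportional to `α₀`. -/

namespace Finset

theorem add_sum_eq_zero_of_eq_neg_add_sum_erase {ι M : Type*} [DecidableEq ι] [AddCommGroup M]
    {s : Finset ι} {i : ι} {f g : ι → M} (c : M) (hi : i ∈ s) (hfg : ∀ k ≠ i, g k = f k)
    (hgi : g i = -(c + ∑ k ∈ s.erase i, f k)) : c + ∑ k ∈ s, g k = 0 := by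
  rw [← add_sum_erase s g hi, hgi, sum_congr rfl fun k hk => hfg k (ne_of_mem_erase hk)]
  abel

end Finset

namespace MisinfoFilter

variable {N : ℕ}

namespace Profile

@[simp]
theorem updPf_pf_self (m : Profile N) (i : Fin N) (msg : PlatformMsg N) :
    (m.updPf i msg).pf i = msg := by
  simp [updPf]

@[simp]
theorem updPf_pf_of_ne (m : Profile N) {i k : Fin N} (msg : PlatformMsg N) (hk : k ≠ i) :
    (m.updPf i msg).pf k = m.pf k := by
  simp [updPf, hk]

@[simp]
theorem updPf_gov (m : Profile N) (i : Fin N) (msg : PlatformMsg N) :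
    (m.updPf i msg).gov = m.gov :=
  rfl

end Profile

namespace Framework

variable (F : Framework N)

theorem eta_eq_zero_of_alpha0_eq_zero {m : Profile N} (h : F.alpha0 m = 0) (i : Fin N) :
    F.eta m i = 0 := by
  simp [eta, h]

theorem tax_eq_zero_of_alpha_eq_zero {m : Profile N} {i : Fin N}
    (hα : ∀ k ∈ F.C i, F.alpha m k = 0) (hα0 : F.alpha0 m = 0)
    (hpP : ∀ l, (m.pf i).pP l = 0) (hpG : (m.pf i).pG = 0) : F.tax m i = 0 := by
  have hαi : F.alpha m i = 0 := hα i (F.mem_C i)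
  have hpay : ∑ l ∈ (F.C i).erase i, F.price m i l * F.alpha m l = 0 :=
    sum_eq_zero fun l hl => by rw [hα l (mem_of_mem_erase hl), mul_zero]
  have hpenalty : ∑ l ∈ (F.C i).erase i,
      (m.pf i).pP l * ((m.pf i).a l - F.aAvgMinus m i l) ^ 2 = 0 :=
    sum_eq_zero fun l _ => by rw [hpP l, zero_mul]
  simp [tax, F.eta_eq_zero_of_alpha0_eq_zero hα0, hαi, hpay, hpenalty, hpG]

theorem util_eq_of_alpha_eq_zero {m : Profile N} {i : Fin N}
    (hα : ∀ k ∈ F.C i, F.alpha m k = 0) (htax : F.tax m i = 0) :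
    F.util m i = F.v i (fun _ => 0) := by
  rw [util, htax, sub_zero]
  exact F.v_localized i _ _ hα

def optOutMsg (m : Profile N) (i : Fin N) : PlatformMsg N where
  ht := 1
  pP _ := 0
  pG := 0
  a k := -∑ l ∈ (F.C k).erase i, (m.pf l).a k
  aG := -(m.gov.aG + ∑ l ∈ univ.erase i, (m.pf l).aG)

theorem optOutMsg_valid (m : Profile N) (i : Fin N) : (F.optOutMsg m i).Valid :=
  ⟨zero_le_one, fun _ => le_rfl, le_rfl⟩

theorem alpha_updPf_optOutMsg (m : Profile N) {i k : Fin N} (hk : k ∈ F.C i) :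
    F.alpha (m.updPf i (F.optOutMsg m i)) k = 0 := by
  have hsum := add_sum_eq_zero_of_eq_neg_add_sum_erase (f := fun l => (m.pf l).a k)
    (g := fun l => ((m.updPf i (F.optOutMsg m i)).pf l).a k) 0 ((F.symm_C i k).mpr hk)
    (fun l hl => by simp [hl]) (by simp [optOutMsg])
  rw [alpha, ← zero_add (∑ _ ∈ _, _), hsum, zero_div]

theorem alpha0_updPf_optOutMsg (m : Profile N) (i : Fin N) :
    F.alpha0 (m.updPf i (F.optOutMsg m i)) = 0 := by
  have hsum := add_sum_eq_zero_of_eq_neg_add_sum_erase (f := fun l => (m.pf l).aG)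
    (g := fun l => ((m.updPf i (F.optOutMsg m i)).pf l).aG) m.gov.aG (mem_univ i)
    (fun l hl => by simp [hl]) (by simp [optOutMsg])
  rw [alpha0, Profile.updPf_gov, hsum, zero_div]

end Framework

/-- **Zero-tax opt-out deviation.** Fix a platform `i` and the messages of
all other players (encoded in the profile `m`). Then platform `i` has a valid message with
all proposed prices equal to zero such that, under the deviated profile, all filters
allocated to the platforms in `C i` are zero, the allocated lower bound is zero,
`η_i` vanishes, `i`'s tax is zero, and `i`'s utility equals its valuation at the all-zero
filter profile. -/
theorem zero_tax_opt_out {N : ℕ} (F : Framework N) (i : Fin N) (m : Profile N) :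
    ∃ msg : PlatformMsg N, msg.Valid ∧ (∀ l, msg.pP l = 0) ∧ msg.pG = 0 ∧
      (∀ k ∈ F.C i, F.alpha (m.updPf i msg) k = 0) ∧
      F.alpha0 (m.updPf i msg) = 0 ∧
      F.eta (m.updPf i msg) i = 0 ∧
      F.tax (m.updPf i msg) i = 0 ∧
      F.util (m.updPf i msg) i = F.v i (fun _ => 0) := by
  have hα := fun k (hk : k ∈ F.C i) => F.alpha_updPf_optOutMsg m hk
  have hα0 := F.alpha0_updPf_optOutMsg m i
  have htax := F.tax_eq_zero_of_alpha_eq_zero hα hα0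
    (by simp [Framework.optOutMsg]) (by simp [Framework.optOutMsg])
  exact ⟨F.optOutMsg m i, F.optOutMsg_valid m i, fun _ => rfl, rfl, hα, hα0,
    F.eta_eq_zero_of_alpha0_eq_zero hα0 i, htax, F.util_eq_of_alpha_eq_zero hα htax⟩

end MisinfoFilter
end
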